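/- arXiv:1502.05775 — 2 statements merged into one kernel-verified Lean document; each statement's English description precedes it below -/
import Mathlib

section
/- The intrinsic information lower-bounds the Wyner intrinsic conditional CI: for any discrete X,Y,Z, min over channels p_{Z̄|Z} of min over Q with X–QZ̄–Y of I(XY;Q|Z̄) is at least min over channels p_{Z̄|Z} of I(X;Y|Z̄); i.e., C_W(X;Y↓Z) ≥ I(X;Y↓Z). -/
open Finset

/-- A probability mass function on a finite sample space. -/
def IsPMF {Ω : Type*} [Fintype Ω] (p : Ω → ℝ) : Prop :=
  (∀ ω, 0 ≤ p ω) ∧ ∑ ω, p ω = 1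

/-- Probability that the random variable `X` takes the value `x`. -/
noncomputable def pr {Ω 𝒳 : Type*} [Fintype Ω] [DecidableEq 𝒳]
    (p : Ω → ℝ) (X : Ω → 𝒳) (x : 𝒳) : ℝ :=
  ∑ ω, if X ω = x then p ω else 0

/-- Shannon entropy (in bits) of the random variable `X` under `p`. -/
noncomputable def H {Ω 𝒳 : Type*} [Fintype Ω] [Fintype 𝒳] [DecidableEq 𝒳]
    (p : Ω → ℝ) (X : Ω → 𝒳) : ℝ :=
  -∑ x, pr p X x * Real.logb 2 (pr p X x)

/-- Conditional entropy `H(X|Y)`. -/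
noncomputable def condH {Ω 𝒳 𝒴 : Type*} [Fintype Ω] [Fintype 𝒳] [DecidableEq 𝒳]
    [Fintype 𝒴] [DecidableEq 𝒴] (p : Ω → ℝ) (X : Ω → 𝒳) (Y : Ω → 𝒴) : ℝ :=
  H p (fun ω => (X ω, Y ω)) - H p Y

/-- Mutual information `I(X;Y)`. -/
noncomputable def MI {Ω 𝒳 𝒴 : Type*} [Fintype Ω] [Fintype 𝒳] [DecidableEq 𝒳]
    [Fintype 𝒴] [DecidableEq 𝒴] (p : Ω → ℝ) (X : Ω → 𝒳) (Y : Ω → 𝒴) : ℝ :=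
  H p X + H p Y - H p (fun ω => (X ω, Y ω))

/-- Conditional mutual information `I(X;Y|Z)`. -/
noncomputable def condMI {Ω 𝒳 𝒴 𝒵 : Type*} [Fintype Ω] [Fintype 𝒳] [DecidableEq 𝒳]
    [Fintype 𝒴] [DecidableEq 𝒴] [Fintype 𝒵] [DecidableEq 𝒵]
    (p : Ω → ℝ) (X : Ω → 𝒳) (Y : Ω → 𝒴) (Z : Ω → 𝒵) : ℝ :=
  condH p X Z - condH p X (fun ω => (Y ω, Z ω))

/-- Conditional Wyner common information C_W(X;Y|Z) of a joint pmf on 𝒳 × 𝒴 × 𝒵: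
the infimum of I(XY;Q|Z) over all extensions of p by a random variable Q with
X-QZ-Y a Markov chain (by the cardinality bound |𝒬| ≤ |𝒳||𝒴|, the auxiliary
alphabet 𝒳 × 𝒴 suffices). -/
noncomputable def CW {𝒳 𝒴 𝒵 : Type*} [Fintype 𝒳] [DecidableEq 𝒳]
    [Fintype 𝒴] [DecidableEq 𝒴] [Fintype 𝒵] [DecidableEq 𝒵]
    (p : 𝒳 × 𝒴 × 𝒵 → ℝ) : ℝ :=
  sInf {r | ∃ q : (𝒳 × 𝒴 × 𝒵) × (𝒳 × 𝒴) → ℝ,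
    IsPMF q ∧ (∀ w, ∑ u, q (w, u) = p w) ∧
    condMI q (fun ω => ω.1.1) (fun ω => ω.1.2.1) (fun ω => (ω.2, ω.1.2.2)) = 0 ∧
    r = condMI q (fun ω => (ω.1.1, ω.1.2.1)) (fun ω => ω.2) (fun ω => ω.1.2.2)}

/-- A channel from 𝒵 to 𝒵 (row-stochastic matrix); by the cardinality bound
on the intrinsic-information minimization the output alphabet 𝒵 suffices. -/
def IsChannel {𝒵 : Type*} [Fintype 𝒵] (ch : 𝒵 → 𝒵 → ℝ) : Prop :=
  ∀ z, (∀ z', 0 ≤ ch z z') ∧ ∑ z', ch z z' = 1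

/-- The joint distribution of (X,Y,Zbar) obtained by passing Z through the channel,
so that XY-Z-Zbar is a Markov chain. -/
noncomputable def pushChannel {𝒳 𝒴 𝒵 : Type*} [Fintype 𝒳] [Fintype 𝒴] [Fintype 𝒵]
    (p : 𝒳 × 𝒴 × 𝒵 → ℝ) (ch : 𝒵 → 𝒵 → ℝ) : 𝒳 × 𝒴 × 𝒵 → ℝ :=
  fun w => ∑ z, p (w.1, w.2.1, z) * ch z w.2.2

/-- Intrinsic information I(X;Y↓Z) = min over channels of I(X;Y|Zbar). -/
noncomputable def IntrinsicInfo {𝒳 𝒴 𝒵 : Type*} [Fintype 𝒳] [DecidableEq 𝒳]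
    [Fintype 𝒴] [DecidableEq 𝒴] [Fintype 𝒵] [DecidableEq 𝒵]
    (p : 𝒳 × 𝒴 × 𝒵 → ℝ) : ℝ :=
  sInf {r | ∃ ch : 𝒵 → 𝒵 → ℝ, IsChannel ch ∧
    r = condMI (pushChannel p ch) (fun w => w.1) (fun w => w.2.1) (fun w => w.2.2)}

/-- Wyner intrinsic conditional CI C_W(X;Y↓Z) = min over channels of C_W(X;Y|Zbar). -/
noncomputable def CWdown {𝒳 𝒴 𝒵 : Type*} [Fintype 𝒳] [DecidableEq 𝒳]
    [Fintype 𝒴] [DecidableEq 𝒴] [Fintype 𝒵] [DecidableEq 𝒵]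
    (p : 𝒳 × 𝒴 × 𝒵 → ℝ) : ℝ :=
  sInf {r | ∃ ch : 𝒵 → 𝒵 → ℝ, IsChannel ch ∧ r = CW (pushChannel p ch)}

section Helpers
variable {Ω : Type*} [Fintype Ω]

lemma pr_nonneg {𝒳 : Type*} [DecidableEq 𝒳] {p : Ω → ℝ} (hp : ∀ ω, 0 ≤ p ω)
    (X : Ω → 𝒳) (x : 𝒳) : 0 ≤ pr p X x := by
  apply Finset.sum_nonneg; intro ω _; split <;> simp [hp ω]

lemma sum_pr {𝒳 : Type*} [Fintype 𝒳] [DecidableEq 𝒳] (p : Ω → ℝ) (X : Ω → 𝒳) :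
    ∑ x, pr p X x = ∑ ω, p ω := by
  unfold pr
  rw [Finset.sum_comm]
  exact Finset.sum_congr rfl fun ω _ => by simp

lemma self_le_pr {𝒳 : Type*} [DecidableEq 𝒳] {p : Ω → ℝ} (hp : ∀ ω, 0 ≤ p ω)
    (X : Ω → 𝒳) (ω₀ : Ω) : p ω₀ ≤ pr p X (X ω₀) := by
  unfold pr
  have := Finset.single_le_sum (f := fun ω => if X ω = X ω₀ then p ω else 0)
    (fun ω _ => by split <;> simp [hp ω]) (Finset.mem_univ ω₀)
  simpa using this

lemma sum_mul_comp {𝒳 : Type*} [Fintype 𝒳] [DecidableEq 𝒳] (p : Ω → ℝ)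
    (T : Ω → 𝒳) (g : 𝒳 → ℝ) :
    ∑ ω, p ω * g (T ω) = ∑ x, pr p T x * g x := by
  have h : ∀ x, pr p T x * g x = ∑ ω, if T ω = x then p ω * g (T ω) else 0 := by
    intro x; unfold pr; rw [Finset.sum_mul]
    exact Finset.sum_congr rfl fun ω _ => by split <;> simp_all
  simp_rw [h]
  rw [Finset.sum_comm]
  exact Finset.sum_congr rfl fun ω _ => by simp

lemma H_eq_sum {𝒳 : Type*} [Fintype 𝒳] [DecidableEq 𝒳] (p : Ω → ℝ) (X : Ω → 𝒳) :
    H p X = -∑ ω, p ω * Real.logb 2 (pr p X (X ω)) := by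
  rw [H, sum_mul_comp p X (fun x => Real.logb 2 (pr p X x))]

lemma pr_comp_inj {𝒳 𝒴 : Type*} [DecidableEq 𝒳] [DecidableEq 𝒴]
    (p : Ω → ℝ) (T : Ω → 𝒳) {f : 𝒳 → 𝒴} (hf : Function.Injective f) (x : 𝒳) :
    pr p (fun ω => f (T ω)) (f x) = pr p T x := by
  unfold pr
  exact Finset.sum_congr rfl fun ω _ => by simp [hf.eq_iff]

lemma H_comp {𝒳 𝒴 : Type*} [Fintype 𝒳] [DecidableEq 𝒳] [Fintype 𝒴] [DecidableEq 𝒴]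
    (p : Ω → ℝ) (T : Ω → 𝒳) (f : 𝒳 → 𝒴) (hf : Function.Injective f) :
    H p (fun ω => f (T ω)) = H p T := by
  rw [H_eq_sum, H_eq_sum]
  congr 1
  exact Finset.sum_congr rfl fun ω _ => by rw [pr_comp_inj p T hf]

lemma pr_pair_le {𝒳 𝒲 : Type*} [DecidableEq 𝒳] [DecidableEq 𝒲]
    {p : Ω → ℝ} (hp : ∀ ω, 0 ≤ p ω) (A : Ω → 𝒳) (W : Ω → 𝒲) (v : 𝒳 × 𝒲) :
    pr p (fun ω => (A ω, W ω)) v ≤ pr p W v.2 := by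
  unfold pr
  apply Finset.sum_le_sum; intro ω _
  by_cases h : (A ω, W ω) = v
  · have h2 : W ω = v.2 := by rw [← h]
    rw [if_pos h, if_pos h2]
  · rw [if_neg h]; split <;> simp [hp ω]

lemma H_pair_of_det {𝒳 𝒲 : Type*} [Fintype 𝒳] [DecidableEq 𝒳] [Fintype 𝒲] [DecidableEq 𝒲]
    (p : Ω → ℝ) (A : Ω → 𝒳) (W : Ω → 𝒲) (f : 𝒲 → 𝒳)
    (h : ∀ ω, p ω ≠ 0 → A ω = f (W ω)) :
    H p (fun ω => (A ω, W ω)) = H p W := by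
  rw [H_eq_sum, H_eq_sum]
  congr 1
  apply Finset.sum_congr rfl; intro ω _
  by_cases hω : p ω = 0
  · simp [hω]
  · have hpr : pr p (fun ω => (A ω, W ω)) (A ω, W ω) = pr p W (W ω) := by
      unfold pr
      apply Finset.sum_congr rfl; intro ω' _
      by_cases hω' : p ω' = 0
      · simp [hω']
      · have h1 := h ω hω; have h2 := h ω' hω'
        by_cases hw : W ω' = W ω
        · simp [hw, Prod.ext_iff, h1, h2]
        · simp [hw, Prod.ext_iff]
    rw [hpr]

lemma pr_fst_marg {𝒳 𝒲 : Type*} [Fintype 𝒳] [DecidableEq 𝒳] [DecidableEq 𝒲]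
    (p : Ω → ℝ) (A : Ω → 𝒳) (W : Ω → 𝒲) (w : 𝒲) :
    ∑ x, pr p (fun ω => (A ω, W ω)) (x, w) = pr p W w := by
  unfold pr
  rw [Finset.sum_comm]
  apply Finset.sum_congr rfl; intro ω _
  by_cases h : W ω = w
  · simp [Prod.ext_iff, h]
  · simp [Prod.ext_iff, h]

end Helpers


section Nonneg
variable {Ω 𝒜 ℬ 𝒞 : Type*} [Fintype Ω] [Fintype 𝒜] [DecidableEq 𝒜]
  [Fintype ℬ] [DecidableEq ℬ] [Fintype 𝒞] [DecidableEq 𝒞]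

lemma condMI_nonneg (p : Ω → ℝ) (hp : IsPMF p)
    (A : Ω → 𝒜) (B : Ω → ℬ) (C : Ω → 𝒞) : 0 ≤ condMI p A B C := by
  obtain ⟨hp0, hp1⟩ := hp
  set a : Ω → ℝ := fun ω => pr p (fun ω => (A ω, C ω)) (A ω, C ω) with ha
  set b : Ω → ℝ := fun ω => pr p (fun ω => (B ω, C ω)) (B ω, C ω) with hb
  set c : Ω → ℝ := fun ω => pr p C (C ω) with hc
  set t : Ω → ℝ := fun ω => pr p (fun ω => (A ω, (B ω, C ω))) (A ω, (B ω, C ω)) with ht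
  have hcond : condMI p A B C = ∑ ω, p ω *
      (Real.logb 2 (c ω) + Real.logb 2 (t ω) - Real.logb 2 (a ω) - Real.logb 2 (b ω)) := by
    simp only [condMI, condH, H_eq_sum]
    simp only [mul_add, mul_sub, Finset.sum_add_distrib, Finset.sum_sub_distrib]
    ring
  rw [hcond]
  -- key quantity u ω = a*b/(c*t)
  have habct : ∀ ω, p ω ≠ 0 → 0 < a ω ∧ 0 < b ω ∧ 0 < c ω ∧ 0 < t ω := by
    intro ω hω
    have hpω : 0 < p ω := lt_of_le_of_ne (hp0 ω) (Ne.symm hω)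
    exact ⟨lt_of_lt_of_le hpω (self_le_pr hp0 _ ω),
      lt_of_lt_of_le hpω (self_le_pr hp0 _ ω),
      lt_of_lt_of_le hpω (self_le_pr hp0 _ ω),
      lt_of_lt_of_le hpω (self_le_pr hp0 _ ω)⟩
  have hsumu : ∑ ω, p ω * (a ω * b ω / (c ω * t ω)) ≤ 1 := by
    have e1 : ∑ ω, p ω * (a ω * b ω / (c ω * t ω))
        = ∑ v : 𝒜 × ℬ × 𝒞, pr p (fun ω => (A ω, (B ω, C ω))) v *
          (pr p (fun ω => (A ω, C ω)) (v.1, v.2.2) * pr p (fun ω => (B ω, C ω)) (v.2.1, v.2.2)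
            / (pr p C v.2.2 * pr p (fun ω => (A ω, (B ω, C ω))) v)) := by
      exact sum_mul_comp p (fun ω => (A ω, (B ω, C ω)))
        (fun v => pr p (fun ω => (A ω, C ω)) (v.1, v.2.2) * pr p (fun ω => (B ω, C ω)) (v.2.1, v.2.2)
            / (pr p C v.2.2 * pr p (fun ω => (A ω, (B ω, C ω))) v))
    rw [e1]
    have alg : ∀ tv av bv cv : ℝ, 0 ≤ av → 0 ≤ bv → 0 ≤ cv → tv ≤ cv → 0 ≤ tv →
        tv * (av * bv / (cv * tv)) ≤ av * bv / cv := by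
      intro tv av bv cv hav hbv hcv htc htv
      rcases eq_or_lt_of_le htv with h0 | h0
      · rw [← h0]
        simp
        positivity
      · have hcv' : 0 < cv := lt_of_lt_of_le h0 htc
        have : tv * (av * bv / (cv * tv)) = av * bv / cv := by
          field_simp
        rw [this]
    have e2 : ∀ v : 𝒜 × ℬ × 𝒞, pr p (fun ω => (A ω, (B ω, C ω))) v *
          (pr p (fun ω => (A ω, C ω)) (v.1, v.2.2) * pr p (fun ω => (B ω, C ω)) (v.2.1, v.2.2)
            / (pr p C v.2.2 * pr p (fun ω => (A ω, (B ω, C ω))) v))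
        ≤ pr p (fun ω => (A ω, C ω)) (v.1, v.2.2) * pr p (fun ω => (B ω, C ω)) (v.2.1, v.2.2)
            / pr p C v.2.2 := by
      intro v
      have htc : pr p (fun ω => (A ω, (B ω, C ω))) v ≤ pr p C v.2.2 :=
        le_trans (pr_pair_le hp0 A (fun ω => (B ω, C ω)) v)
          (pr_pair_le hp0 B C v.2)
      exact alg _ _ _ _ (pr_nonneg hp0 _ _) (pr_nonneg hp0 _ _) (pr_nonneg hp0 _ _)
        htc (pr_nonneg hp0 _ _)
    calc _ ≤ ∑ v : 𝒜 × ℬ × 𝒞, pr p (fun ω => (A ω, C ω)) (v.1, v.2.2) *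
              pr p (fun ω => (B ω, C ω)) (v.2.1, v.2.2) / pr p C v.2.2 :=
          Finset.sum_le_sum fun v _ => e2 v
      _ = ∑ z : 𝒞, (∑ x : 𝒜, pr p (fun ω => (A ω, C ω)) (x, z)) *
              (∑ y : ℬ, pr p (fun ω => (B ω, C ω)) (y, z)) / pr p C z := by
          have step : ∀ (F : 𝒜 → ℬ → 𝒞 → ℝ),
              ∑ x, ∑ y, ∑ z, F x y z = ∑ z, ∑ x, ∑ y, F x y z := by
            intro F
            calc ∑ x, ∑ y, ∑ z, F x y z = ∑ x, ∑ z, ∑ y, F x y z :=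
                Finset.sum_congr rfl fun a _ => Finset.sum_comm
              _ = ∑ z, ∑ x, ∑ y, F x y z := Finset.sum_comm
          rw [Fintype.sum_prod_type]
          simp_rw [Fintype.sum_prod_type]
          rw [step]
          apply Finset.sum_congr rfl; intro z _
          rw [Finset.sum_mul, Finset.sum_div]
          apply Finset.sum_congr rfl; intro x _
          rw [Finset.mul_sum, Finset.sum_div]
      _ ≤ ∑ z : 𝒞, pr p C z := by
          apply Finset.sum_le_sum; intro z _
          rw [pr_fst_marg, pr_fst_marg]
          rcases eq_or_lt_of_le (pr_nonneg hp0 C z) with h0 | h0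
          · rw [← h0]; simp
          · rw [mul_div_assoc, div_self (ne_of_gt h0), mul_one]
      _ = 1 := by rw [sum_pr, hp1]
  have hterm : ∀ ω, p ω * (Real.logb 2 (a ω) + Real.logb 2 (b ω)
        - Real.logb 2 (c ω) - Real.logb 2 (t ω))
      ≤ p ω * (a ω * b ω / (c ω * t ω) - 1) / Real.log 2 := by
    intro ω
    by_cases hω : p ω = 0
    · simp [hω]
    obtain ⟨ha', hb', hc', ht'⟩ := habct ω hω
    have hu : 0 < a ω * b ω / (c ω * t ω) := div_pos (mul_pos ha' hb') (mul_pos hc' ht')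
    have hlog : Real.logb 2 (a ω) + Real.logb 2 (b ω) - Real.logb 2 (c ω) - Real.logb 2 (t ω)
        = Real.logb 2 (a ω * b ω / (c ω * t ω)) := by
      rw [Real.logb_div (by positivity) (by positivity),
        Real.logb_mul (ne_of_gt ha') (ne_of_gt hb'),
        Real.logb_mul (ne_of_gt hc') (ne_of_gt ht')]
      ring
    have gen : ∀ u : ℝ, 0 < u → p ω * Real.logb 2 u ≤ p ω * (u - 1) / Real.log 2 := by
      intro u hu'
      rw [Real.logb, mul_div_assoc]
      apply mul_le_mul_of_nonneg_left _ (hp0 ω)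
      have h2 : (0:ℝ) < Real.log 2 := Real.log_pos one_lt_two
      exact div_le_div_of_nonneg_right (Real.log_le_sub_one_of_pos hu') h2.le
    rw [hlog]
    exact gen _ hu
  have hsum2 : ∑ ω, p ω * (Real.logb 2 (a ω) + Real.logb 2 (b ω)
      - Real.logb 2 (c ω) - Real.logb 2 (t ω)) ≤ 0 := by
    calc _ ≤ ∑ ω, p ω * (a ω * b ω / (c ω * t ω) - 1) / Real.log 2 :=
          Finset.sum_le_sum fun ω _ => hterm ω
      _ = (∑ ω, p ω * (a ω * b ω / (c ω * t ω)) - 1) / Real.log 2 := by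
          rw [← Finset.sum_div]
          congr 1
          simp_rw [mul_sub, mul_one]
          rw [Finset.sum_sub_distrib, hp1]
      _ ≤ 0 := by
          apply div_nonpos_of_nonpos_of_nonneg
          · linarith
          · exact Real.log_nonneg (by norm_num)
  have : ∑ ω, p ω * (Real.logb 2 (c ω) + Real.logb 2 (t ω)
      - Real.logb 2 (a ω) - Real.logb 2 (b ω))
      = -∑ ω, p ω * (Real.logb 2 (a ω) + Real.logb 2 (b ω)
      - Real.logb 2 (c ω) - Real.logb 2 (t ω)) := by
    rw [← Finset.sum_neg_distrib]
    exact Finset.sum_congr rfl fun ω _ => by ring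
  rw [this]
  linarith

end Nonneg

section KeyIneq
variable {Ω 𝒳 𝒴 𝒵 𝒬 : Type*} [Fintype Ω] [Fintype 𝒳] [DecidableEq 𝒳]
  [Fintype 𝒴] [DecidableEq 𝒴] [Fintype 𝒵] [DecidableEq 𝒵] [Fintype 𝒬] [DecidableEq 𝒬]

lemma condMI_pair_ge (q : Ω → ℝ) (hq : IsPMF q)
    (X : Ω → 𝒳) (Y : Ω → 𝒴) (Z : Ω → 𝒵) (Q : Ω → 𝒬)
    (hmar : condMI q X Y (fun ω => (Q ω, Z ω)) = 0) :
    condMI q X Y Z ≤ condMI q (fun ω => (X ω, Y ω)) Q Z := by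
  have r1 : H q (fun ω => ((X ω, Y ω), Z ω)) = H q (fun ω => (X ω, (Y ω, Z ω))) :=
    H_comp q (fun ω => (X ω, (Y ω, Z ω))) (fun v => ((v.1, v.2.1), v.2.2))
      (fun a b h => by simp only [Prod.ext_iff] at h ⊢; tauto)
  have r2 : H q (fun ω => ((X ω, Y ω), (Q ω, Z ω)))
      = H q (fun ω => (X ω, (Y ω, (Q ω, Z ω)))) :=
    H_comp q (fun ω => (X ω, (Y ω, (Q ω, Z ω))))
      (fun v => ((v.1, v.2.1), (v.2.2.1, v.2.2.2)))
      (fun a b h => by simp only [Prod.ext_iff] at h ⊢; tauto)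
  have r3 : H q (fun ω => (Y ω, (X ω, Z ω))) = H q (fun ω => (X ω, (Y ω, Z ω))) :=
    H_comp q (fun ω => (X ω, (Y ω, Z ω))) (fun v => (v.2.1, (v.1, v.2.2)))
      (fun a b h => by simp only [Prod.ext_iff] at h ⊢; tauto)
  have r4 : H q (fun ω => (Y ω, (Q ω, (X ω, Z ω))))
      = H q (fun ω => (X ω, (Y ω, (Q ω, Z ω)))) :=
    H_comp q (fun ω => (X ω, (Y ω, (Q ω, Z ω))))
      (fun v => (v.2.1, (v.2.2.1, (v.1, v.2.2.2))))
      (fun a b h => by simp only [Prod.ext_iff] at h ⊢; tauto)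
  have r5 : H q (fun ω => (Q ω, (X ω, Z ω))) = H q (fun ω => (X ω, (Q ω, Z ω))) :=
    H_comp q (fun ω => (X ω, (Q ω, Z ω))) (fun v => (v.2.1, (v.1, v.2.2)))
      (fun a b h => by simp only [Prod.ext_iff] at h ⊢; tauto)
  have r6 : H q (fun ω => (X ω, (Q ω, (Y ω, Z ω))))
      = H q (fun ω => (X ω, (Y ω, (Q ω, Z ω)))) :=
    H_comp q (fun ω => (X ω, (Y ω, (Q ω, Z ω))))
      (fun v => (v.1, (v.2.2.1, (v.2.1, v.2.2.2))))
      (fun a b h => by simp only [Prod.ext_iff] at h ⊢; tauto)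
  have r7 : H q (fun ω => (Q ω, (Y ω, Z ω))) = H q (fun ω => (Y ω, (Q ω, Z ω))) :=
    H_comp q (fun ω => (Y ω, (Q ω, Z ω))) (fun v => (v.2.1, (v.1, v.2.2)))
      (fun a b h => by simp only [Prod.ext_iff] at h ⊢; tauto)
  have N1 : 0 ≤ condMI q Y Q (fun ω => (X ω, Z ω)) := condMI_nonneg q hq _ _ _
  have N2 : 0 ≤ condMI q X Q (fun ω => (Y ω, Z ω)) := condMI_nonneg q hq _ _ _
  simp only [condMI, condH] at hmar N1 N2 ⊢
  rw [r3, r4, r5] at N1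
  rw [r6, r7] at N2
  rw [r1, r2]
  linarith

end KeyIneq

section Marg
variable {𝒲 𝒰 : Type*} [Fintype 𝒲] [Fintype 𝒰]

lemma pr_fst {V : Type*} [DecidableEq V]
    (q : 𝒲 × 𝒰 → ℝ) (p' : 𝒲 → ℝ) (h : ∀ w, ∑ u, q (w, u) = p' w)
    (g : 𝒲 → V) (v : V) : pr q (fun ω => g ω.1) v = pr p' g v := by
  unfold pr
  rw [Fintype.sum_prod_type]
  apply Finset.sum_congr rfl; intro w _
  by_cases hg : g w = v
  · simp only [hg, if_true, h w]
  · simp only [hg, if_false, Finset.sum_const_zero]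

lemma H_fst {V : Type*} [Fintype V] [DecidableEq V]
    (q : 𝒲 × 𝒰 → ℝ) (p' : 𝒲 → ℝ) (h : ∀ w, ∑ u, q (w, u) = p' w)
    (g : 𝒲 → V) : H q (fun ω => g ω.1) = H p' g := by
  unfold H
  congr 1
  exact Finset.sum_congr rfl fun v _ => by rw [pr_fst q p' h]

lemma condMI_fst {𝒳 𝒴 𝒵 : Type*} [Fintype 𝒳] [DecidableEq 𝒳]
    [Fintype 𝒴] [DecidableEq 𝒴] [Fintype 𝒵] [DecidableEq 𝒵]
    (q : 𝒲 × 𝒰 → ℝ) (p' : 𝒲 → ℝ) (h : ∀ w, ∑ u, q (w, u) = p' w)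
    (A : 𝒲 → 𝒳) (B : 𝒲 → 𝒴) (C : 𝒲 → 𝒵) :
    condMI q (fun ω => A ω.1) (fun ω => B ω.1) (fun ω => C ω.1) = condMI p' A B C := by
  simp only [condMI, condH]
  rw [H_fst q p' h (fun w => (A w, C w)), H_fst q p' h C,
    H_fst q p' h (fun w => (A w, (B w, C w))), H_fst q p' h (fun w => (B w, C w))]

end Marg
section Main
variable {𝒳 𝒴 𝒵 : Type*} [Fintype 𝒳] [DecidableEq 𝒳]
  [Fintype 𝒴] [DecidableEq 𝒴] [Fintype 𝒵] [DecidableEq 𝒵]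

lemma pushChannel_pmf (p : 𝒳 × 𝒴 × 𝒵 → ℝ) (hp : IsPMF p)
    (ch : 𝒵 → 𝒵 → ℝ) (hch : IsChannel ch) : IsPMF (pushChannel p ch) := by
  obtain ⟨hp0, hp1⟩ := hp
  refine ⟨fun w => Finset.sum_nonneg fun z _ => mul_nonneg (hp0 _) ((hch z).1 _), ?_⟩
  unfold pushChannel
  calc ∑ w : 𝒳 × 𝒴 × 𝒵, ∑ z, p (w.1, w.2.1, z) * ch z w.2.2
      = ∑ x, ∑ y, ∑ z', ∑ z, p (x, y, z) * ch z z' := by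
        rw [Fintype.sum_prod_type]
        exact Finset.sum_congr rfl fun x _ => by rw [Fintype.sum_prod_type]
    _ = ∑ x, ∑ y, ∑ z, ∑ z', p (x, y, z) * ch z z' :=
        Finset.sum_congr rfl fun x _ => Finset.sum_congr rfl fun y _ => Finset.sum_comm
    _ = ∑ x, ∑ y, ∑ z, p (x, y, z) := by
        apply Finset.sum_congr rfl; intro x _
        apply Finset.sum_congr rfl; intro y _
        apply Finset.sum_congr rfl; intro z _
        rw [← Finset.mul_sum, (hch z).2, mul_one]
    _ = 1 := by
        rw [← hp1, Fintype.sum_prod_type]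
        exact Finset.sum_congr rfl fun x _ => by rw [Fintype.sum_prod_type]

end Main

/-- C_W(X;Y↓Z) ≥ I(X;Y↓Z). -/
theorem CWdown_ge_intrinsic {𝒳 𝒴 𝒵 : Type*} [Fintype 𝒳] [DecidableEq 𝒳]
    [Fintype 𝒴] [DecidableEq 𝒴] [Fintype 𝒵] [DecidableEq 𝒵]
    (p : 𝒳 × 𝒴 × 𝒵 → ℝ) (hp : IsPMF p) :
    IntrinsicInfo p ≤ CWdown p := by
  have idch : IsChannel (fun z z' : 𝒵 => if z = z' then (1:ℝ) else 0) := by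
    intro z
    constructor
    · intro z'; dsimp only; split <;> norm_num
    · simp
  have hBdd : BddBelow {r | ∃ ch : 𝒵 → 𝒵 → ℝ, IsChannel ch ∧
      r = condMI (pushChannel p ch) (fun w => w.1) (fun w => w.2.1) (fun w => w.2.2)} := by
    refine ⟨0, ?_⟩
    rintro r ⟨ch, hch, rfl⟩
    exact condMI_nonneg _ (pushChannel_pmf p hp ch hch) _ _ _
  rw [CWdown]
  apply le_csInf
  · exact ⟨CW (pushChannel p (fun z z' => if z = z' then 1 else 0)), _, idch, rfl⟩
  · rintro r ⟨ch, hch, rfl⟩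
    have hq'' := pushChannel_pmf p hp ch hch
    set p'' := pushChannel p ch with hp''
    have step1 : IntrinsicInfo p ≤ condMI p'' (fun w => w.1) (fun w => w.2.1) (fun w => w.2.2) := by
      rw [IntrinsicInfo]
      exact csInf_le hBdd ⟨ch, hch, rfl⟩
    refine le_trans step1 ?_
    rw [CW]
    apply le_csInf
    · -- nonempty: Q = (X,Y)
      set q0 : (𝒳 × 𝒴 × 𝒵) × (𝒳 × 𝒴) → ℝ :=
        fun ω => p'' ω.1 * (if ω.2 = (ω.1.1, ω.1.2.1) then 1 else 0) with hq0
      have hsupp : ∀ ω, q0 ω ≠ 0 → ω.2 = (ω.1.1, ω.1.2.1) := by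
        intro ω hω
        by_contra hc
        apply hω
        simp [hq0, hc]
      have hmarg0 : ∀ w, ∑ u, q0 (w, u) = p'' w := by
        intro w
        simp only [hq0]
        rw [← Finset.mul_sum]
        simp
      refine ⟨_, q0, ⟨fun ω => mul_nonneg (hq''.1 _) (by split <;> norm_num), ?_⟩,
        hmarg0, ?_, rfl⟩
      · rw [Fintype.sum_prod_type]
        calc ∑ w, ∑ u, q0 (w, u) = ∑ w, p'' w := Finset.sum_congr rfl fun w _ => hmarg0 w
          _ = 1 := hq''.2
      · -- markov: X determined by (Q,Z)
        have d1 : H q0 (fun ω => (ω.1.1, ((ω.2, ω.1.2.2)))) = H q0 (fun ω => (ω.2, ω.1.2.2)) :=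
          H_pair_of_det q0 _ _ (fun v => v.1.1)
            (fun ω hω => by rw [hsupp ω hω])
        have d2 : H q0 (fun ω => (ω.1.1, (ω.1.2.1, (ω.2, ω.1.2.2))))
            = H q0 (fun ω => (ω.1.2.1, (ω.2, ω.1.2.2))) :=
          H_pair_of_det q0 _ _ (fun v => v.2.1.1)
            (fun ω hω => by rw [hsupp ω hω])
        simp only [condMI, condH]
        rw [d1, d2]
        ring
    · rintro s ⟨q, hq, hmarg, hmarkov, rfl⟩
      have e : condMI q (fun ω => ω.1.1) (fun ω => ω.1.2.1) (fun ω => ω.1.2.2)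
          = condMI p'' (fun w => w.1) (fun w => w.2.1) (fun w => w.2.2) :=
        condMI_fst q p'' hmarg (fun w => w.1) (fun w => w.2.1) (fun w => w.2.2)
      rw [← e]
      exact condMI_pair_ge q hq (fun ω => ω.1.1) (fun ω => ω.1.2.1)
        (fun ω => ω.1.2.2) (fun ω => ω.2) hmarkov
end

section
/- For any discrete random variables X and Y, the Gács–Körner common information satisfies C_GK(X;Y) = H(Q*) where Q* is the maximal common random variable induced by the ergodic decomposition of p_{XY}, and I(X;Y) = H(Q*) + I(X;Y|Q*). -/
/-!
Expanding `H(W|Z) = ∑ p(w,z) (log p(z) - log p(w,z))` into termwise nonnegative summands shows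
that `H(W|Z) = 0` exactly when `W` is a function of `Z` on the support. A function of both `X` and
`Y` is constant along every edge of the characteristic bipartite graph, hence a function of the
component `Q*` of `X`, so its entropy is at most `H(Q*)`. For any such common `Q`, the identity
`I(X;Y) = H(Q) + I(X;Y|Q)` is the chain rule together with `H(X,Q) = H(X)`, `H(Y,Q) = H(Y)`.
-/

open Finset

section Entropy

variable {Ω 𝒲 𝒵 : Type*} [Fintype Ω] [DecidableEq 𝒲] [DecidableEq 𝒵] {p : Ω → ℝ}

def DeterminedBy (p : Ω → ℝ) (W : Ω → 𝒲) (Z : Ω → 𝒵) : Prop :=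
  ∀ ω ω', 0 < p ω → 0 < p ω' → Z ω = Z ω' → W ω = W ω'

lemma mul_logb_sub_nonneg {b q r : ℝ} (hb : 1 < b) (hq : 0 ≤ q) (hqr : q ≤ r) :
    0 ≤ q * (Real.logb b r - Real.logb b q) := by
  rcases hq.eq_or_lt with rfl | hq
  · simp
  · exact mul_nonneg hq.le (sub_nonneg.2 (Real.logb_le_logb_of_le hb hq hqr))

lemma mul_logb_sub_eq_zero_iff {b q r : ℝ} (hb : 1 < b) (hq : 0 ≤ q) (hqr : q ≤ r) :
    q * (Real.logb b r - Real.logb b q) = 0 ↔ q = 0 ∨ q = r := by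
  rw [mul_eq_zero, sub_eq_zero]
  refine or_congr_right' fun hq0 => ?_
  have hq : 0 < q := lt_of_le_of_ne hq (Ne.symm hq0)
  exact ⟨fun h => (Real.logb_injOn_pos hb hq (hq.trans_le hqr) h.symm), fun h => h ▸ rfl⟩

lemma pr_nonneg_s12 (h0 : ∀ ω, 0 ≤ p ω) (Z : Ω → 𝒵) (z : 𝒵) : 0 ≤ pr p Z z :=
  Finset.sum_nonneg fun ω _ => by split_ifs <;> simp [h0 ω]

lemma le_pr (h0 : ∀ ω, 0 ≤ p ω) (Z : Ω → 𝒵) (ω : Ω) : p ω ≤ pr p Z (Z ω) := by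
  simpa [pr] using Finset.single_le_sum (f := fun ω' => if Z ω' = Z ω then p ω' else 0)
    (fun ω' _ => by split_ifs <;> simp [h0 ω']) (Finset.mem_univ ω)

lemma exists_pos_of_pr_pos {Z : Ω → 𝒵} {z : 𝒵} (h : 0 < pr p Z z) :
    ∃ ω, 0 < p ω ∧ Z ω = z := by
  obtain ⟨ω, -, hω⟩ := Finset.exists_lt_of_sum_lt (s := Finset.univ) (f := fun _ => 0)
    (g := fun ω => if Z ω = z then p ω else 0) (by simpa [pr] using h)
  by_cases hZ : Z ω = z
  · exact ⟨ω, by simpa [hZ] using hω, hZ⟩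
  · simp [hZ] at hω

lemma sum_pr_pair [Fintype 𝒲] (W : Ω → 𝒲) (Z : Ω → 𝒵) (z : 𝒵) :
    ∑ w, pr p (fun ω => (W ω, Z ω)) (w, z) = pr p Z z := by
  unfold pr
  rw [Finset.sum_comm]
  refine Finset.sum_congr rfl fun ω _ => ?_
  by_cases hZ : Z ω = z <;> simp [hZ]

lemma pr_pair_le_s12 [Fintype 𝒲] (h0 : ∀ ω, 0 ≤ p ω) (W : Ω → 𝒲) (Z : Ω → 𝒵) (w : 𝒲) (z : 𝒵) :
    pr p (fun ω => (W ω, Z ω)) (w, z) ≤ pr p Z z := by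
  rw [← sum_pr_pair W Z z]
  exact Finset.single_le_sum (fun w _ => pr_nonneg_s12 h0 _ (w, z)) (Finset.mem_univ w)

lemma pr_pair_eq_zero_or_eq_iff [Fintype 𝒲] (h0 : ∀ ω, 0 ≤ p ω) {W : Ω → 𝒲} {Z : Ω → 𝒵} :
    (∀ w z, pr p (fun ω => (W ω, Z ω)) (w, z) = 0 ∨
      pr p (fun ω => (W ω, Z ω)) (w, z) = pr p Z z) ↔ DeterminedBy p W Z := by
  refine ⟨fun h ω ω' hω hω' hZ => ?_, fun h w z => ?_⟩
  · -- two distinct values of `W` over the same `z` would each carry all of `pr p Z z > 0`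
    by_contra hW
    have hpos : ∀ ν, 0 < p ν → Z ν = Z ω → pr p (fun ω => (W ω, Z ω)) (W ν, Z ω) = pr p Z (Z ω) :=
      fun ν hν hZν => (h _ _).resolve_left <| by
        have := hν.trans_le (le_pr h0 (fun ω => (W ω, Z ω)) ν)
        rw [hZν] at this
        exact this.ne'
    have hsum := Finset.add_le_sum (fun w _ => pr_nonneg_s12 h0 (fun ω => (W ω, Z ω)) (w, Z ω))
      (Finset.mem_univ (W ω)) (Finset.mem_univ (W ω')) hW
    rw [sum_pr_pair, hpos ω hω rfl, hpos ω' hω' hZ.symm] at hsum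
    linarith [hω.trans_le (le_pr h0 Z ω)]
  · rcases (pr_nonneg_s12 h0 _ (w, z)).eq_or_lt with h' | h'
    · exact Or.inl h'.symm
    obtain ⟨ω₀, hω₀, hWZ₀⟩ := exists_pos_of_pr_pos h'
    simp only [Prod.mk.injEq] at hWZ₀
    refine Or.inr (Finset.sum_congr rfl fun ω _ => ?_)
    by_cases hZ : Z ω = z
    · rcases (h0 ω).eq_or_lt with hω | hω
      · simp [← hω]
      · simp [hZ, ← hWZ₀.1, h ω ω₀ hω hω₀ (hZ.trans hWZ₀.2.symm)]
    · simp [hZ]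

variable [Fintype 𝒲] [Fintype 𝒵]

lemma condH_eq_sum (W : Ω → 𝒲) (Z : Ω → 𝒵) :
    condH p W Z = ∑ x : 𝒲 × 𝒵, pr p (fun ω => (W ω, Z ω)) x *
      (Real.logb 2 (pr p Z x.2) - Real.logb 2 (pr p (fun ω => (W ω, Z ω)) x)) := by
  have hZ : ∑ z, pr p Z z * Real.logb 2 (pr p Z z) =
      ∑ x : 𝒲 × 𝒵, pr p (fun ω => (W ω, Z ω)) x * Real.logb 2 (pr p Z x.2) := by
    rw [Fintype.sum_prod_type, Finset.sum_comm]
    simp only [← Finset.sum_mul, sum_pr_pair]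
  simp only [condH, H, mul_sub, Finset.sum_sub_distrib, hZ]
  ring

lemma condH_nonneg (h0 : ∀ ω, 0 ≤ p ω) (W : Ω → 𝒲) (Z : Ω → 𝒵) : 0 ≤ condH p W Z := by
  rw [condH_eq_sum]
  exact Finset.sum_nonneg fun x _ =>
    mul_logb_sub_nonneg one_lt_two (pr_nonneg_s12 h0 _ x) (pr_pair_le_s12 h0 W Z x.1 x.2)

lemma condH_eq_zero_iff (h0 : ∀ ω, 0 ≤ p ω) {W : Ω → 𝒲} {Z : Ω → 𝒵} :
    condH p W Z = 0 ↔ DeterminedBy p W Z := by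
  rw [condH_eq_sum, Finset.sum_eq_zero_iff_of_nonneg fun x _ =>
    mul_logb_sub_nonneg one_lt_two (pr_nonneg_s12 h0 _ x) (pr_pair_le_s12 h0 W Z x.1 x.2),
    ← pr_pair_eq_zero_or_eq_iff h0]
  simp only [Finset.mem_univ, true_implies, Prod.forall]
  exact forall₂_congr fun w z =>
    mul_logb_sub_eq_zero_iff one_lt_two (pr_nonneg_s12 h0 _ _) (pr_pair_le_s12 h0 W Z w z)

lemma H_pair_eq_of_determinedBy (h0 : ∀ ω, 0 ≤ p ω) {W : Ω → 𝒲} {Z : Ω → 𝒵}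
    (h : DeterminedBy p W Z) : H p (fun ω => (W ω, Z ω)) = H p Z :=
  sub_eq_zero.1 ((condH_eq_zero_iff h0).2 h)

lemma H_pair_comm (W : Ω → 𝒲) (Z : Ω → 𝒵) :
    H p (fun ω => (W ω, Z ω)) = H p (fun ω => (Z ω, W ω)) := by
  unfold H
  congr 1
  refine Fintype.sum_equiv (Equiv.prodComm 𝒲 𝒵) _ _ fun x => ?_
  have : pr p (fun ω => (W ω, Z ω)) x = pr p (fun ω => (Z ω, W ω)) x.swap := by
    simp only [pr, Prod.ext_iff, Prod.fst_swap, Prod.snd_swap, and_comm]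
  simp [this]

lemma H_le_of_determinedBy (h0 : ∀ ω, 0 ≤ p ω) {W : Ω → 𝒲} {Z : Ω → 𝒵}
    (h : DeterminedBy p W Z) : H p W ≤ H p Z :=
  calc H p W ≤ H p W + condH p Z W := le_add_of_nonneg_right (condH_nonneg h0 Z W)
    _ = H p (fun ω => (W ω, Z ω)) := by rw [condH, H_pair_comm]; ring
    _ = H p Z := H_pair_eq_of_determinedBy h0 h

lemma H_eq_of_determinedBy (h0 : ∀ ω, 0 ≤ p ω) {W : Ω → 𝒲} {Z : Ω → 𝒵}
    (hWZ : DeterminedBy p W Z) (hZW : DeterminedBy p Z W) : H p W = H p Z :=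
  le_antisymm (H_le_of_determinedBy h0 hWZ) (H_le_of_determinedBy h0 hZW)

end Entropy

section ErgodicDecomposition

variable {Ω 𝒳 𝒴 : Type*} {p : Ω → ℝ} {X : Ω → 𝒳} {Y : Ω → 𝒴}

/-- `a` and `b` are adjacent to a common `Y`-value in the characteristic bipartite graph. -/
def HaveCommonNeighbor (p : Ω → ℝ) (X : Ω → 𝒳) (Y : Ω → 𝒴) (a b : 𝒳) : Prop :=
  ∃ ω ω', 0 < p ω ∧ 0 < p ω' ∧ X ω = a ∧ X ω' = b ∧ Y ω = Y ω'

instance : Std.Symm (HaveCommonNeighbor p X Y) :=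
  ⟨fun _ _ ⟨ω, ω', hω, hω', ha, hb, hY⟩ => ⟨ω', ω, hω', hω, hb, ha, hY.symm⟩⟩

/-- The maximal common random variable `Q*`: the connected component of `X ω`, encoded by a
representative `X`-value so that it lives on the alphabet of `X`. -/
noncomputable def ergodicComponent (p : Ω → ℝ) (X : Ω → 𝒳) (Y : Ω → 𝒴) (ω : Ω) : 𝒳 :=
  (Quot.mk (HaveCommonNeighbor p X Y) (X ω)).out

lemma ergodicComponent_determinedBy_fst : DeterminedBy p (ergodicComponent p X Y) X :=
  fun _ _ _ _ h => by simp only [ergodicComponent, h]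

lemma ergodicComponent_determinedBy_snd : DeterminedBy p (ergodicComponent p X Y) Y :=
  fun ω ω' hω hω' h => congrArg Quot.out (Quot.sound ⟨ω, ω', hω, hω', rfl, rfl, h⟩)

lemma eq_of_reflTransGen_haveCommonNeighbor {𝒬 : Type*} {Q : Ω → 𝒬}
    (hX : DeterminedBy p Q X) (hY : DeterminedBy p Q Y) {ω ω' : Ω} (hω : 0 < p ω)
    (hω' : 0 < p ω') (h : Relation.ReflTransGen (HaveCommonNeighbor p X Y) (X ω) (X ω')) :
    Q ω = Q ω' := by
  generalize hb : X ω' = b at h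
  induction h generalizing ω' with
  | refl => exact hX ω ω' hω hω' hb.symm
  | tail _ hbc ih =>
    obtain ⟨ω₁, ω₂, hω₁, hω₂, hX₁, hX₂, hY₁₂⟩ := hbc
    exact (ih hω₁ hX₁).trans ((hY ω₁ ω₂ hω₁ hω₂ hY₁₂).trans (hX ω₂ ω' hω₂ hω' (hX₂.trans hb.symm)))

lemma determinedBy_ergodicComponent {𝒬 : Type*} {Q : Ω → 𝒬}
    (hX : DeterminedBy p Q X) (hY : DeterminedBy p Q Y) :
    DeterminedBy p Q (ergodicComponent p X Y) := by
  intro ω ω' hω hω' h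
  have hQuot := congrArg (Quot.mk (HaveCommonNeighbor p X Y)) h
  simp only [ergodicComponent, Quot.out_eq] at hQuot
  have hchain := Quot.eqvGen_exact hQuot
  rw [Relation.EqvGen.eqvGen_eq_reflTransGen] at hchain
  exact eq_of_reflTransGen_haveCommonNeighbor hX hY hω hω' hchain

end ErgodicDecomposition

section CommonInformation

variable {Ω 𝒳 𝒴 𝒬 : Type*} [Fintype Ω] [Fintype 𝒳] [DecidableEq 𝒳] [Fintype 𝒴] [DecidableEq 𝒴]
  [Fintype 𝒬] [DecidableEq 𝒬] {p : Ω → ℝ} {X : Ω → 𝒳} {Y : Ω → 𝒴} {Q : Ω → 𝒬}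

lemma MI_eq_H_add_condMI (h0 : ∀ ω, 0 ≤ p ω) (hX : DeterminedBy p Q X)
    (hY : DeterminedBy p Q Y) : MI p X Y = H p Q + condMI p X Y Q := by
  have hXQ : H p (fun ω => (X ω, Q ω)) = H p X := by
    rw [H_pair_comm, H_pair_eq_of_determinedBy h0 hX]
  have hYQ : H p (fun ω => (Y ω, Q ω)) = H p Y := by
    rw [H_pair_comm, H_pair_eq_of_determinedBy h0 hY]
  have hXYQ : H p (fun ω => (X ω, (Y ω, Q ω))) = H p (fun ω => (X ω, Y ω)) :=
    H_eq_of_determinedBy h0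
      (fun ω ω' hω hω' h => by simp_all [hX ω ω' hω hω' (congrArg Prod.fst h)])
      (fun _ _ _ _ h => by simp_all)
  simp only [MI, condMI, condH, hXQ, hYQ, hXYQ]
  ring

end CommonInformation

/-- the Gacs-Korner common information is attained by a maximal common
random variable Q* (a deterministic function of X and of Y, representable with
alphabet 𝒳, maximizing entropy among all common functions), and the identity
I(X;Y) = H(Q*) + I(X;Y|Q*) holds. -/
theorem GK_maximal_common_rv {Ω 𝒳 𝒴 : Type*} [Fintype Ω]
    [Fintype 𝒳] [DecidableEq 𝒳] [Fintype 𝒴] [DecidableEq 𝒴]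
    (p : Ω → ℝ) (X : Ω → 𝒳) (Y : Ω → 𝒴) (hp : IsPMF p) :
    ∃ Qs : Ω → 𝒳,
      condH p Qs X = 0 ∧ condH p Qs Y = 0 ∧
      (∀ (𝒬 : Type) [Fintype 𝒬] [DecidableEq 𝒬] (Q : Ω → 𝒬),
        condH p Q X = 0 → condH p Q Y = 0 → H p Q ≤ H p Qs) ∧
      MI p X Y = H p Qs + condMI p X Y Qs := by
  obtain ⟨h0, -⟩ := hp
  have hX := ergodicComponent_determinedBy_fst (p := p) (X := X) (Y := Y)
  have hY := ergodicComponent_determinedBy_snd (p := p) (X := X) (Y := Y)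
  refine ⟨ergodicComponent p X Y, (condH_eq_zero_iff h0).2 hX, (condH_eq_zero_iff h0).2 hY,
    fun 𝒬 _ _ Q hQX hQY => ?_, MI_eq_H_add_condMI h0 hX hY⟩
  exact H_le_of_determinedBy h0 <|
    determinedBy_ergodicComponent ((condH_eq_zero_iff h0).1 hQX) ((condH_eq_zero_iff h0).1 hQY)
end
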